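/- Let Φ be the standard normal distribution function. There exists a constant c > 0 such that for all n ≥ 2, all t ∈ [0, √(log n)], and t₁ = t + B(log n)/√n with a fixed constant B > 0: 1 ≥ (1 - Φ(t₁))/(1 - Φ(t)) ≥ 1 - c(t+1)(log n)/√n. -/

import Mathlib

open MeasureTheory

/-- The standard normal distribution function. -/
noncomputable def stdNormalCDF (t : ℝ) : ℝ :=
  (Real.sqrt (2 * Real.pi))⁻¹ * ∫ u in Set.Iic t, Real.exp (-u ^ 2 / 2)

/-!
The tail `∫_t^∞ e^{-u²/2} du` loses at most `(t₁ - t) e^{-t²/2}` on `[t, t₁]`, while integrating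
over `[t, t + 1/(t+1)]` alone shows that it is at least `e^{-3/2} e^{-t²/2} / (t+1)`. Hence the
tail ratio is at least `1 - e^{3/2} (t+1) (t₁ - t)`, and `t₁ - t = B log n / √n`.
-/

open Set Real

lemma integrable_exp_neg_sq_div_two : Integrable fun u : ℝ => exp (-u ^ 2 / 2) := by
  simpa [neg_div, div_eq_inv_mul] using integrable_exp_neg_mul_sq (b := 1 / 2) (by norm_num)

lemma integral_exp_neg_sq_div_two : ∫ u : ℝ, exp (-u ^ 2 / 2) = √(2 * π) := by
  have h := integral_gaussian (1 / 2 : ℝ)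
  rw [show π / (1 / 2) = 2 * π by ring] at h
  simpa [neg_div, div_eq_inv_mul] using h

lemma one_sub_stdNormalCDF (t : ℝ) :
    1 - stdNormalCDF t = (√(2 * π))⁻¹ * ∫ u in Ioi t, exp (-u ^ 2 / 2) := by
  have hsplit := intervalIntegral.integral_Iic_add_Ioi (b := t)
    integrable_exp_neg_sq_div_two.integrableOn integrable_exp_neg_sq_div_two.integrableOn
  rw [integral_exp_neg_sq_div_two] at hsplit
  have hs : √(2 * π) ≠ 0 := by positivity
  rw [stdNormalCDF, eq_sub_of_add_eq' hsplit, mul_sub, inv_mul_cancel₀ hs]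

lemma one_sub_stdNormalCDF_div (s t : ℝ) :
    (1 - stdNormalCDF s) / (1 - stdNormalCDF t) =
      (∫ u in Ioi s, exp (-u ^ 2 / 2)) / ∫ u in Ioi t, exp (-u ^ 2 / 2) := by
  rw [one_sub_stdNormalCDF, one_sub_stdNormalCDF, mul_div_mul_left]
  positivity

lemma setIntegral_Ioc_add_setIntegral_Ioi_exp_neg_sq_div_two {t s : ℝ} (hts : t ≤ s) :
    (∫ u in Ioc t s, exp (-u ^ 2 / 2)) + ∫ u in Ioi s, exp (-u ^ 2 / 2) =
      ∫ u in Ioi t, exp (-u ^ 2 / 2) := by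
  rw [← setIntegral_union (Ioc_disjoint_Ioi le_rfl) measurableSet_Ioi
    integrable_exp_neg_sq_div_two.integrableOn integrable_exp_neg_sq_div_two.integrableOn,
    Ioc_union_Ioi_eq_Ioi hts]

lemma setIntegral_Ioi_exp_neg_sq_div_two_antitone :
    Antitone fun t : ℝ => ∫ u in Ioi t, exp (-u ^ 2 / 2) := fun _ _ hts =>
  setIntegral_mono_set integrable_exp_neg_sq_div_two.integrableOn
    (.of_forall fun _ => (exp_pos _).le) (.of_forall (Ioi_subset_Ioi hts))

lemma exp_neg_sq_div_two_antitoneOn : AntitoneOn (fun u : ℝ => exp (-u ^ 2 / 2)) (Ici 0) :=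
  fun u hu v _ huv => by
    simp only [exp_le_exp]
    nlinarith [mem_Ici.mp hu]

lemma setIntegral_Ioc_exp_neg_sq_div_two_le {t s : ℝ} (ht : 0 ≤ t) (hts : t ≤ s) :
    ∫ u in Ioc t s, exp (-u ^ 2 / 2) ≤ (s - t) * exp (-t ^ 2 / 2) := by
  calc ∫ u in Ioc t s, exp (-u ^ 2 / 2) ≤ ∫ _ in Ioc t s, exp (-t ^ 2 / 2) :=
        setIntegral_mono_on integrable_exp_neg_sq_div_two.integrableOn
          (integrableOn_const measure_Ioc_lt_top.ne) measurableSet_Ioc fun u hu =>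
            exp_neg_sq_div_two_antitoneOn ht (ht.trans hu.1.le) hu.1.le
    _ = (s - t) * exp (-t ^ 2 / 2) := by
        rw [setIntegral_const, volume_real_Ioc_of_le hts, smul_eq_mul]

lemma mul_exp_neg_sq_div_two_le_setIntegral_Ioc {t s : ℝ} (ht : 0 ≤ t) (hts : t ≤ s) :
    (s - t) * exp (-s ^ 2 / 2) ≤ ∫ u in Ioc t s, exp (-u ^ 2 / 2) := by
  calc (s - t) * exp (-s ^ 2 / 2) = ∫ _ in Ioc t s, exp (-s ^ 2 / 2) := by
        rw [setIntegral_const, volume_real_Ioc_of_le hts, smul_eq_mul]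
    _ ≤ ∫ u in Ioc t s, exp (-u ^ 2 / 2) :=
        setIntegral_mono_on (integrableOn_const measure_Ioc_lt_top.ne)
          integrable_exp_neg_sq_div_two.integrableOn measurableSet_Ioc fun u hu =>
            exp_neg_sq_div_two_antitoneOn (ht.trans hu.1.le) (ht.trans hts) hu.2

lemma exp_neg_sq_div_two_le_mul_setIntegral_Ioi {t : ℝ} (ht : 0 ≤ t) :
    exp (-t ^ 2 / 2) ≤ exp (3 / 2) * (t + 1) * ∫ u in Ioi t, exp (-u ^ 2 / 2) := by
  set δ := (t + 1)⁻¹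
  have hδ : 0 < δ := by positivity
  have hδ1 : δ ≤ 1 := inv_le_one_of_one_le₀ (by linarith)
  have htδ : t * δ ≤ 1 := by
    rw [← div_eq_mul_inv, div_le_one (by linarith)]; linarith
  -- on `[t, t + δ]` the exponent drops by at most `tδ + δ²/2 ≤ 3/2`
  have hexp : exp (-t ^ 2 / 2) ≤ exp (3 / 2) * exp (-(t + δ) ^ 2 / 2) := by
    rw [← exp_add, exp_le_exp]; nlinarith
  have hδt : (t + 1) * δ = 1 := mul_inv_cancel₀ (by positivity)
  calc exp (-t ^ 2 / 2) ≤ exp (3 / 2) * exp (-(t + δ) ^ 2 / 2) := hexp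
    _ = exp (3 / 2) * (t + 1) * (δ * exp (-(t + δ) ^ 2 / 2)) := by
        linear_combination (-(exp (3 / 2) * exp (-(t + δ) ^ 2 / 2))) * hδt
    _ ≤ exp (3 / 2) * (t + 1) * ∫ u in Ioc t (t + δ), exp (-u ^ 2 / 2) := by
        gcongr
        simpa using mul_exp_neg_sq_div_two_le_setIntegral_Ioc ht (le_add_of_nonneg_right hδ.le)
    _ ≤ exp (3 / 2) * (t + 1) * ∫ u in Ioi t, exp (-u ^ 2 / 2) := by
        refine mul_le_mul_of_nonneg_left ?_ (by positivity)
        exact setIntegral_mono_set integrable_exp_neg_sq_div_two.integrableOn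
          (.of_forall fun _ => (exp_pos _).le) (.of_forall Ioc_subset_Ioi_self)

lemma one_sub_stdNormalCDF_div_le_one {t s : ℝ} (hts : t ≤ s) :
    (1 - stdNormalCDF s) / (1 - stdNormalCDF t) ≤ 1 := by
  rw [one_sub_stdNormalCDF_div]
  exact div_le_one_of_le₀ (setIntegral_Ioi_exp_neg_sq_div_two_antitone hts)
    (setIntegral_nonneg measurableSet_Ioi fun _ _ => (exp_pos _).le)

lemma one_sub_le_one_sub_stdNormalCDF_div {t s : ℝ} (ht : 0 ≤ t) (hts : t ≤ s) :
    1 - exp (3 / 2) * (t + 1) * (s - t) ≤ (1 - stdNormalCDF s) / (1 - stdNormalCDF t) := by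
  set I := ∫ u in Ioi t, exp (-u ^ 2 / 2)
  have hmills := exp_neg_sq_div_two_le_mul_setIntegral_Ioi ht
  have hI : 0 < I := pos_of_mul_pos_right ((exp_pos _).trans_le hmills) (by positivity)
  have hsplit := setIntegral_Ioc_add_setIntegral_Ioi_exp_neg_sq_div_two hts
  have hmid := setIntegral_Ioc_exp_neg_sq_div_two_le ht hts
  rw [one_sub_stdNormalCDF_div, le_div_iff₀ hI]
  nlinarith [mul_le_mul_of_nonneg_left hmills (sub_nonneg.mpr hts)]

/-- There is `c > 0` such that for all `n ≥ 2`, `t ∈ [0, √(log n)]`, and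
`t₁ = t + B log n/√n`, one has
`1 ≥ (1 - Φ(t₁))/(1 - Φ(t)) ≥ 1 - c(t+1)(log n)/√n`. -/
theorem normal_tail_ratio_moderate (B : ℝ) (hB : 0 < B) :
    ∃ c : ℝ, 0 < c ∧ ∀ n : ℕ, 2 ≤ n →
      ∀ t : ℝ, t ∈ Set.Icc 0 (Real.sqrt (Real.log n)) →
        1 ≥ (1 - stdNormalCDF (t + B * Real.log n / Real.sqrt n)) / (1 - stdNormalCDF t) ∧
        (1 - stdNormalCDF (t + B * Real.log n / Real.sqrt n)) / (1 - stdNormalCDF t) ≥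
          1 - c * (t + 1) * Real.log n / Real.sqrt n := by
  refine ⟨B * exp (3 / 2), by positivity, fun n hn t ⟨ht, _⟩ => ?_⟩
  have hlog : 0 ≤ log n := log_nonneg (by exact_mod_cast (by omega : 1 ≤ n))
  have hts : t ≤ t + B * log n / √n := le_add_of_nonneg_right (by positivity)
  refine ⟨one_sub_stdNormalCDF_div_le_one hts, ?_⟩
  convert one_sub_le_one_sub_stdNormalCDF_div ht hts using 2
  ring
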